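/- Monotonicity of R_max under conditioning through free maps implies: if Ω(ρ) < Ω(ρ') (with Ω(ρ') possibly infinite), then there is no sequence of positive linear free maps E_n (E_n(cone(F)) ⊆ cone(F)) with Tr E_n(ρ) > 0 and E_n(ρ)/Tr E_n(ρ) → ρ'; i.e., ρ' cannot even be approached asymptotically from ρ by free probabilistic protocols, provided Ω is lower semicontinuous. -/

import Mathlib

open scoped ENNReal NNReal ComplexOrder
open Matrix

variable {ι κ : Type*}

/-- Max-relative entropy (non-logarithmic): `inf { λ ≥ 0 : ρ ≤ λσ }`, with `inf ∅ = ∞`.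
Here `A ≤ B` means `B - A` is positive semidefinite. -/
noncomputable def Rmax [Fintype ι] (ρ σ : Matrix ι ι ℂ) : ℝ≥0∞ :=
  sInf {x : ℝ≥0∞ | ∃ l : ℝ≥0, x = (l : ℝ≥0∞) ∧ ((l : ℝ) • σ - ρ).PosSemidef}

/-- A state: positive semidefinite with unit trace. -/
def IsState [Fintype ι] (ρ : Matrix ι ι ℂ) : Prop :=
  ρ.PosSemidef ∧ ρ.trace = 1

/-- A pure state: a rank-one (idempotent) state. -/
def IsPure [Fintype ι] (φ : Matrix ι ι ℂ) : Prop :=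
  φ.PosSemidef ∧ φ * φ = φ ∧ φ.trace = 1

/-- The cone generated by a set of states. -/
noncomputable def cone (F : Set (Matrix ι ι ℂ)) : Set (Matrix ι ι ℂ) :=
  {x | ∃ (l : ℝ≥0) (σ : Matrix ι ι ℂ), σ ∈ F ∧ x = (l : ℝ) • σ}

/-- Projective robustness `Ω(ρ) = inf_{σ ∈ F} Rmax(ρ‖σ) Rmax(σ‖ρ)`. -/
noncomputable def Omega [Fintype ι] (F : Set (Matrix ι ι ℂ)) (ρ : Matrix ι ι ℂ) : ℝ≥0∞ :=
  ⨅ σ ∈ F, Rmax ρ σ * Rmax σ ρ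

/-- Support of an operator, as the range of the associated linear map. -/
noncomputable def msupport [Fintype ι] (ρ : Matrix ι ι ℂ) : Submodule ℂ (ι → ℂ) :=
  LinearMap.range ρ.mulVecLin

/-- A positive linear map on matrices. -/
def IsPosMap [Fintype ι] [Fintype κ] (E : Matrix ι ι ℂ →ₗ[ℂ] Matrix κ κ ℂ) : Prop :=
  ∀ ρ, ρ.PosSemidef → (E ρ).PosSemidef

/-- Maximal fidelity with the free set: `F_F(φ) = max_{σ ∈ F} ⟨φ|σ|φ⟩ = max_{σ ∈ F} Tr(φσ)`. -/
noncomputable def Ffree [Fintype ι] (F : Set (Matrix ι ι ℂ)) (φ : Matrix ι ι ℂ) : ℝ :=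
  sSup {x : ℝ | ∃ σ ∈ F, x = ((φ * σ).trace).re}

/-!
A free positive map `E` cannot increase `Ω` after normalisation: `R_max` satisfies data
processing under positive maps, it scales as `R_max(aρ‖bσ) ≤ (a/b) R_max(ρ‖σ)`, and `E` sends each
free `σ` to a multiple `l τ` of a free state `τ`, so the normalisation factors cancel in
`R_max(ρ''‖τ) R_max(τ‖ρ'')`. Lower semicontinuity of `Ω` at `ρ'` then gives `Ω(ρ') ≤ Ω(ρ)` for any
limit `ρ'` of normalised outputs.
-/

section Rmax

variable [Fintype ι] [Fintype κ]

lemma Rmax_le_coe {ρ σ : Matrix ι ι ℂ} {l : ℝ≥0} (h : ((l : ℝ) • σ - ρ).PosSemidef) :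
    Rmax ρ σ ≤ l :=
  sInf_le ⟨l, rfl, h⟩

lemma Rmax_eq_iInf (ρ σ : Matrix ι ι ℂ) :
    Rmax ρ σ = ⨅ (l : ℝ≥0) (_ : ((l : ℝ) • σ - ρ).PosSemidef), (l : ℝ≥0∞) :=
  le_antisymm (le_iInf₂ fun _ => Rmax_le_coe)
    (le_sInf fun _ ⟨l, hx, hl⟩ => hx ▸ iInf₂_le l hl)

lemma Rmax_map_le {E : Matrix ι ι ℂ →ₗ[ℂ] Matrix κ κ ℂ} (hE : IsPosMap E) (ρ σ : Matrix ι ι ℂ) :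
    Rmax (E ρ) (E σ) ≤ Rmax ρ σ :=
  sInf_le_sInf fun _ ⟨l, hx, hl⟩ => ⟨l, hx, by simpa [LinearMap.map_smul_of_tower] using hE _ hl⟩

lemma Rmax_smul_smul_le (ρ σ : Matrix ι ι ℂ) {a b : ℝ} (ha : 0 < a) (hb : 0 < b) :
    Rmax (a • ρ) (b • σ) ≤ ENNReal.ofReal (a / b) * Rmax ρ σ := by
  have hc : ENNReal.ofReal (a / b) ≠ 0 := by simpa using div_pos ha hb
  rw [Rmax_eq_iInf, Rmax_eq_iInf, ENNReal.mul_iInf_of_ne hc ENNReal.ofReal_ne_top]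
  refine le_iInf fun l => ?_
  rw [ENNReal.mul_iInf_of_ne hc ENNReal.ofReal_ne_top]
  refine le_iInf fun hl => ?_
  have hfeas : (((a / b).toNNReal * l : ℝ≥0) : ℝ) • b • σ - a • ρ = a • ((l : ℝ) • σ - ρ) := by
    rw [NNReal.coe_mul, Real.coe_toNNReal _ (div_pos ha hb).le, smul_smul, smul_sub, smul_smul]
    congr 2
    field_simp
  exact iInf₂_le _ (hfeas ▸ hl.smul ha.le)

lemma Rmax_zero_right_eq_top {ρ : Matrix ι ι ℂ} (hρ : 0 < ρ.trace.re) : Rmax ρ 0 = ⊤ := by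
  refine sInf_eq_top.2 fun _ ⟨l, _, hl⟩ => absurd hρ (not_lt.2 ?_)
  simpa using (Complex.nonneg_iff.1 hl.trace_nonneg).1

lemma one_le_Rmax {ρ σ : Matrix ι ι ℂ} (hρ : IsState ρ) (hσ : IsState σ) : 1 ≤ Rmax ρ σ := by
  refine le_sInf fun _ ⟨l, hx, hl⟩ => hx ▸ ?_
  have htr := (Complex.nonneg_iff.1 hl.trace_nonneg).1
  rw [trace_sub, trace_smul, hρ.2, hσ.2] at htr
  exact_mod_cast (by simpa using htr : (1 : ℝ) ≤ l)

end Rmax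

lemma Matrix.PosSemidef.isState_inv_trace_smul [Fintype ι] {A : Matrix ι ι ℂ} (hA : A.PosSemidef)
    (ht : 0 < A.trace.re) : IsState (A.trace.re⁻¹ • A) := by
  refine ⟨hA.smul (inv_nonneg.2 ht.le), ?_⟩
  have him : A.trace.im = 0 := ((Complex.nonneg_iff.1 hA.trace_nonneg).2).symm
  rw [trace_smul, Complex.real_smul]
  apply Complex.ext <;> simp [him, ht.ne']

lemma Omega_inv_trace_smul_map_le [Fintype ι] [Fintype κ] {F : Set (Matrix ι ι ℂ)}
    {G : Set (Matrix κ κ ℂ)} (hF : ∀ σ ∈ F, IsState σ) {E : Matrix ι ι ℂ →ₗ[ℂ] Matrix κ κ ℂ}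
    (hE : IsPosMap E) (hfree : ∀ x ∈ cone F, E x ∈ cone G) {ρ : Matrix ι ι ℂ} (hρ : IsState ρ)
    (ht : 0 < (E ρ).trace.re) :
    Omega G ((E ρ).trace.re⁻¹ • E ρ) ≤ Omega F ρ := by
  refine le_iInf₂ fun σ hσ => ?_
  obtain ⟨l, τ, hτ, hEσ⟩ := hfree σ ⟨1, σ, hσ, by simp⟩
  rcases eq_or_ne l 0 with rfl | hl
  · -- `E σ = 0` while `E ρ ≠ 0`, so `R_max(ρ‖σ) = ∞` by data processing.
    have hρσ : Rmax ρ σ = ⊤ := by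
      simpa [hEσ, Rmax_zero_right_eq_top ht] using Rmax_map_le hE ρ σ
    rw [hρσ, ENNReal.top_mul (one_pos.trans_le (one_le_Rmax (hF σ hσ) hρ)).ne']
    exact le_top
  have hl' : (0 : ℝ) < l := by positivity
  have hτ' : τ = (l : ℝ)⁻¹ • E σ := by rw [hEσ, smul_smul, inv_mul_cancel₀ hl'.ne', one_smul]
  calc Omega G ((E ρ).trace.re⁻¹ • E ρ)
      ≤ Rmax ((E ρ).trace.re⁻¹ • E ρ) τ * Rmax τ ((E ρ).trace.re⁻¹ • E ρ) := iInf₂_le τ hτ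
    _ ≤ ENNReal.ofReal ((E ρ).trace.re⁻¹ / (l : ℝ)⁻¹) * Rmax (E ρ) (E σ) *
          (ENNReal.ofReal ((l : ℝ)⁻¹ / (E ρ).trace.re⁻¹) * Rmax (E σ) (E ρ)) := by
      rw [hτ']
      exact mul_le_mul' (Rmax_smul_smul_le _ _ (inv_pos.2 ht) (inv_pos.2 hl'))
        (Rmax_smul_smul_le _ _ (inv_pos.2 hl') (inv_pos.2 ht))
    _ = Rmax (E ρ) (E σ) * Rmax (E σ) (E ρ) := by
      rw [mul_mul_mul_comm, ← ENNReal.ofReal_mul (by positivity),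
        div_mul_div_cancel₀' (inv_pos.2 ht).ne', div_self (inv_pos.2 hl').ne',
        ENNReal.ofReal_one, one_mul]
    _ ≤ Rmax ρ σ * Rmax σ ρ := mul_le_mul' (Rmax_map_le hE ρ σ) (Rmax_map_le hE σ ρ)

theorem omega_no_asymptotic_approach_general [Fintype ι]
    (F : Set (Matrix ι ι ℂ)) (hFstate : ∀ σ ∈ F, IsState σ)
    (ρ ρ' : Matrix ι ι ℂ) (hρ : IsState ρ) (hρ' : IsState ρ')
    (hlsc : LowerSemicontinuousOn (Omega F) {x : Matrix ι ι ℂ | IsState x})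
    (hlt : Omega F ρ < Omega F ρ') :
    ¬ ∃ E : ℕ → (Matrix ι ι ℂ →ₗ[ℂ] Matrix ι ι ℂ),
      (∀ k, IsPosMap (E k)) ∧
      (∀ k, ∀ x ∈ cone F, E k x ∈ cone F) ∧
      (∀ k, 0 < (((E k) ρ).trace).re) ∧
      Filter.Tendsto (fun k => ((((E k) ρ).trace).re)⁻¹ • (E k) ρ)
        Filter.atTop (nhds ρ') := by
  rintro ⟨E, hEpos, hEfree, hEtr, hEconv⟩
  have hlim : Filter.Tendsto (fun k => ((E k) ρ).trace.re⁻¹ • (E k) ρ) Filter.atTop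
      (nhdsWithin ρ' {x | IsState x}) :=
    tendsto_nhdsWithin_iff.2
      ⟨hEconv, .of_forall fun k => (hEpos k ρ hρ.1).isState_inv_trace_smul (hEtr k)⟩
  obtain ⟨k, hk⟩ := (hlim.eventually (hlsc ρ' hρ' _ hlt)).exists
  exact (Omega_inv_trace_smul_map_le hFstate (hEpos k) (hEfree k) hρ (hEtr k)).not_gt hk

/-- if `Ω(ρ) < Ω(ρ')` and `Ω` is lower semicontinuous on states, then `ρ'` cannot
even be approached asymptotically from `ρ` by free probabilistic protocols. -/
theorem omega_no_asymptotic_approach [Fintype ι] [DecidableEq ι]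
    (F : Set (Matrix ι ι ℂ)) (hFne : F.Nonempty) (hFcpt : IsCompact F)
    (hFconv : Convex ℝ F) (hFstate : ∀ σ ∈ F, IsState σ)
    (ρ ρ' : Matrix ι ι ℂ) (hρ : IsState ρ) (hρ' : IsState ρ')
    (hlsc : LowerSemicontinuousOn (Omega F) {x : Matrix ι ι ℂ | IsState x})
    (hlt : Omega F ρ < Omega F ρ') :
    ¬ ∃ E : ℕ → (Matrix ι ι ℂ →ₗ[ℂ] Matrix ι ι ℂ),
      (∀ k, IsPosMap (E k)) ∧
      (∀ k, ∀ x ∈ cone F, E k x ∈ cone F) ∧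
      (∀ k, 0 < (((E k) ρ).trace).re) ∧
      Filter.Tendsto (fun k => ((((E k) ρ).trace).re)⁻¹ • (E k) ρ)
        Filter.atTop (nhds ρ') :=
  omega_no_asymptotic_approach_general F hFstate ρ ρ' hρ hρ' hlsc hlt
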